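/- arXiv:1709.08053 — 2 statements merged into one kernel-verified Lean document; each statement's English description precedes it below -/
import Mathlib

section
/- For a purely harmonic finite signal x(n) = A·e^{2πiωn/N} with A ≠ 0 and integer ω ∈ {0,...,N−1}, at any point (n,l) where V_g x(n,l) ≠ 0, the ratio V_g x(n+1,l)/V_g x(n,l) equals e^{2πiω/N}; consequently the instantaneous frequency information ω_x(n,l) = round((N/(2πi)) ln(V_g x(n+1,l)/V_g x(n,l))) equals ω. -/
open Complex Finset

/-- Modified finite STFT: `V_g x (n,l) = ∑_k x(k) conj(g(k-n)) e^{-2πil(k-n)/N}`, indices mod N. -/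
noncomputable def Vstft {N : ℕ} [NeZero N] (g x : ZMod N → ℂ) (n l : ZMod N) : ℂ :=
  ∑ k : ZMod N, x k * (starRingEnd ℂ) (g (k - n)) *
    Complex.exp (-(2 * (Real.pi : ℂ) * Complex.I) * ((l.val : ℂ) * (((k - n : ZMod N)).val : ℂ)) / (N : ℂ))

/-- Discrete Fourier transform: `ĝ(m) = ∑_n g(n) e^{-2πimn/N}`. -/
noncomputable def dft {N : ℕ} [NeZero N] (g : ZMod N → ℂ) (m : ZMod N) : ℂ :=
  ∑ n : ZMod N, g n *
    Complex.exp (-(2 * (Real.pi : ℂ) * Complex.I) * ((m.val : ℂ) * ((n.val : ℂ))) / (N : ℂ))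

lemma exp_mod (N : ℕ) [NeZero N] (m a : ℕ) :
    Complex.exp (2*(Real.pi:ℂ)*Complex.I * ((m:ℂ) * ((a % N : ℕ):ℂ)) / N) =
    Complex.exp (2*(Real.pi:ℂ)*Complex.I * ((m:ℂ) * (a:ℂ)) / N) := by
  have hN : (N:ℂ) ≠ 0 := Nat.cast_ne_zero.mpr (NeZero.ne N)
  have ha : (a:ℂ) = ((a % N : ℕ):ℂ) + (N:ℂ) * ((a / N : ℕ):ℂ) := by
    exact_mod_cast congrArg (Nat.cast : ℕ → ℂ) (Nat.mod_add_div a N).symm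
  rw [show 2*(Real.pi:ℂ)*Complex.I * ((m:ℂ) * (a:ℂ)) / N
      = 2*(Real.pi:ℂ)*Complex.I * ((m:ℂ) * ((a % N : ℕ):ℂ)) / N
        + (((m*(a/N) : ℕ):ℤ):ℂ) * (2*(Real.pi:ℂ)*Complex.I) by
    rw [ha, Int.cast_natCast, Nat.cast_mul]; field_simp]
  rw [Complex.exp_add, Complex.exp_int_mul_two_pi_mul_I, mul_one]

lemma key (N : ℕ) [NeZero N] (g : ZMod N → ℂ) (A : ℂ) (ω : ZMod N)
    (x : ZMod N → ℂ)
    (hx : ∀ n : ZMod N,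
      x n = A * Complex.exp (2 * (Real.pi : ℂ) * Complex.I * ((ω.val : ℂ) * (n.val : ℂ)) / (N : ℂ)))
    (n l : ZMod N) :
    Vstft g x (n + 1) l
      = Complex.exp (2 * (Real.pi : ℂ) * Complex.I * (ω.val : ℂ) / (N : ℂ)) * Vstft g x n l := by
  have hN : (N:ℂ) ≠ 0 := Nat.cast_ne_zero.mpr (NeZero.ne N)
  unfold Vstft
  rw [Finset.mul_sum]
  rw [← Equiv.sum_comp (Equiv.addRight (1 : ZMod N))]
  refine Finset.sum_congr rfl fun j _ => ?_
  simp only [Equiv.coe_addRight]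
  have h1 : j + 1 - (n + 1) = j - n := by ring
  rw [h1]
  have h2 : x (j + 1) = Complex.exp (2 * (Real.pi : ℂ) * Complex.I * (ω.val : ℂ) / (N : ℂ)) * x j := by
    rw [hx, hx]
    have hval : (j + 1 : ZMod N).val = (j.val + 1) % N := by
      rw [ZMod.val_add, ZMod.val_one_eq_one_mod]
      conv_lhs => rw [Nat.add_mod, Nat.mod_mod_of_dvd 1 dvd_rfl]
      rw [← Nat.add_mod]
    rw [hval, exp_mod N ω.val (j.val + 1)]
    rw [show 2*(Real.pi:ℂ)*Complex.I * ((ω.val:ℂ) * ((j.val + 1 : ℕ):ℂ)) / N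
        = 2*(Real.pi:ℂ)*Complex.I * (ω.val:ℂ) / N
          + 2*(Real.pi:ℂ)*Complex.I * ((ω.val:ℂ) * (j.val:ℂ)) / N by
      push_cast; field_simp; ring]
    rw [Complex.exp_add]; ring
  rw [h2]; ring

theorem stmt1 (N : ℕ) [NeZero N] (g : ZMod N → ℂ) (A : ℂ) (hA : A ≠ 0) (ω : ZMod N)
    (x : ZMod N → ℂ)
    (hx : ∀ n : ZMod N,
      x n = A * Complex.exp (2 * (Real.pi : ℂ) * Complex.I * ((ω.val : ℂ) * (n.val : ℂ)) / (N : ℂ)))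
    (n l : ZMod N) (hV : Vstft g x n l ≠ 0) :
    Vstft g x (n + 1) l / Vstft g x n l =
      Complex.exp (2 * (Real.pi : ℂ) * Complex.I * (ω.val : ℂ) / (N : ℂ)) ∧
    ((round ((((N : ℂ) / (2 * (Real.pi : ℂ) * Complex.I)) *
        Complex.log (Vstft g x (n + 1) l / Vstft g x n l)).re) : ℤ) : ZMod N) = ω := by
  have hN : (N:ℂ) ≠ 0 := Nat.cast_ne_zero.mpr (NeZero.ne N)
  have hNR : (0:ℝ) < N := Nat.cast_pos.mpr (Nat.pos_of_ne_zero (NeZero.ne N))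
  have hπ : (0:ℝ) < Real.pi := Real.pi_pos
  have hratio : Vstft g x (n + 1) l / Vstft g x n l =
      Complex.exp (2 * (Real.pi : ℂ) * Complex.I * (ω.val : ℂ) / (N : ℂ)) := by
    rw [key N g A ω x hx n l, mul_div_assoc, div_self hV, mul_one]
  refine ⟨hratio, ?_⟩
  rw [hratio]
  set θ : ℝ := 2 * Real.pi * (ω.val : ℝ) / N with hθ
  have hexp : (2 * (Real.pi : ℂ) * Complex.I * (ω.val : ℂ) / (N : ℂ)) = (θ:ℂ) * Complex.I := by
    push_cast [hθ]; field_simp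
  have hθ0 : 0 ≤ θ := by positivity
  have hωlt : (ω.val : ℝ) < N := by exact_mod_cast ZMod.val_lt ω
  have hθlt : θ < 2 * Real.pi := by
    rw [hθ, div_lt_iff₀ hNR]
    nlinarith
  rw [hexp]
  by_cases hc : 2 * ω.val ≤ N
  · -- θ ≤ π
    have hθle : θ ≤ Real.pi := by
      rw [hθ, div_le_iff₀ hNR]
      have : (2 * ω.val : ℝ) ≤ N := by exact_mod_cast hc
      nlinarith
    have hlog : Complex.log (Complex.exp ((θ:ℂ) * Complex.I)) = (θ:ℂ) * Complex.I := by
      apply Complex.log_exp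
      · simpa using lt_of_lt_of_le (neg_neg_of_pos hπ) hθ0
      · simpa using hθle
    rw [hlog]
    have hval : ((N:ℂ) / (2 * (Real.pi:ℂ) * Complex.I)) * ((θ:ℂ) * Complex.I) = (ω.val : ℂ) := by
      rw [hθ]; push_cast
      have hπC : (Real.pi : ℂ) ≠ 0 := by exact_mod_cast hπ.ne'
      field_simp
    rw [hval]
    have h1 : ((ω.val:ℂ)).re = ((ω.val:ℤ):ℝ) := by simp [-ZMod.natCast_val]
    rw [h1, round_intCast]
    simp [ZMod.natCast_val, ZMod.cast_id]
  · -- θ > π; shift by 2π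
    push_neg at hc
    have hθgt : Real.pi < θ := by
      rw [hθ, lt_div_iff₀ hNR]
      have : (N:ℝ) < 2 * ω.val := by exact_mod_cast hc
      nlinarith
    have hshift : Complex.exp ((θ:ℂ) * Complex.I) = Complex.exp (((θ - 2*Real.pi : ℝ):ℂ) * Complex.I) := by
      rw [show (θ:ℂ) * Complex.I = ((θ - 2*Real.pi : ℝ):ℂ) * Complex.I + 2*(Real.pi:ℂ)*Complex.I by push_cast; ring]
      rw [Complex.exp_add, Complex.exp_two_pi_mul_I, mul_one]
    rw [hshift]
    have hlog : Complex.log (Complex.exp (((θ - 2*Real.pi : ℝ):ℂ) * Complex.I)) = ((θ - 2*Real.pi : ℝ):ℂ) * Complex.I := by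
      apply Complex.log_exp
      · simp only [Complex.mul_I_im, Complex.ofReal_re]
        nlinarith
      · simp only [Complex.mul_I_im, Complex.ofReal_re]
        nlinarith
    rw [hlog]
    have hval : ((N:ℂ) / (2 * (Real.pi:ℂ) * Complex.I)) * (((θ - 2*Real.pi : ℝ):ℂ) * Complex.I)
        = (((ω.val : ℤ) - N : ℤ):ℂ) := by
      rw [hθ]; push_cast
      have hπC : (Real.pi : ℂ) ≠ 0 := by exact_mod_cast hπ.ne'
      field_simp
    rw [hval]
    have h1 : ((((ω.val : ℤ) - N : ℤ):ℂ)).re = (((ω.val : ℤ) - N : ℤ):ℝ) := by simp [-ZMod.natCast_val, -ZMod.intCast_cast]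
    rw [h1, round_intCast]
    push_cast
    simp [ZMod.natCast_val, ZMod.cast_id]
end

section
/- Amplitude-variation bound for the STFT of a modulated signal: let x(k) = A(k)e^{2πiφ(k)/N} with A: ℝ → ℝ differentiable and φ: ℝ → ℝ twice differentiable, and let x₀(k) = A(n)e^{(2πi/N)[φ(n) + φ'(n)(k−n)]} be its linearization at a fixed n. Then for every l, |V_g x(n,l) − V_g x₀(n,l)| ≤ ‖A'‖_∞·Σ_{k=0}^{N-1}|g(k−n)||k−n| + π|A(n)|·‖φ''‖_∞·(1/N)·Σ_{k=0}^{N-1}|g(k−n)||k−n|², where in the STFT sum the sample indices k range over 0,...,N−1 (no periodization of A, φ). -/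
open Complex Finset

/-!
Term by term, `x k - x₀ k = (A k - A n) e^{2πiφ(k)/N} + A n (e^{2πiφ(k)/N} - e^{2πi(φ n + φ' n (k-n))/N})`.
The first summand is controlled by the mean value inequality; for the second, `t ↦ e^{it}` is
1-Lipschitz and Lagrange's remainder gives `|φ k - φ n - φ' n (k - n)| ≤ ‖φ''‖ (k - n)² / 2`.
The window and the modulation contribute only the factor `|g (k - n)|`.
-/

open Set

lemma norm_exp_ofReal_mul_I_sub_exp_ofReal_mul_I_le (a b : ℝ) :
    ‖exp (a * I) - exp (b * I)‖ ≤ |a - b| := by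
  have hfactor : exp (a * I) - exp (b * I) = exp (b * I) * (exp (I * (a - b : ℝ)) - 1) := by
    rw [mul_sub, ← Complex.exp_add]; push_cast; ring_nf
  rw [hfactor, norm_mul, norm_exp_ofReal_mul_I, one_mul, ← Real.norm_eq_abs]
  exact Real.norm_exp_I_mul_ofReal_sub_one_le

lemma taylorWithinEval_one (f : ℝ → ℝ) {s : Set ℝ} {a : ℝ} (hs : UniqueDiffWithinAt ℝ s a)
    (hf : DifferentiableAt ℝ f a) (x : ℝ) :
    taylorWithinEval f 1 s a x = f a + deriv f a * (x - a) := by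
  rw [taylorWithinEval_succ, taylor_within_zero_eval, iteratedDerivWithin_one,
    hf.derivWithin hs]
  simp [smul_eq_mul, mul_comm]

lemma abs_sub_sub_deriv_mul_le {φ : ℝ → ℝ} (hφ : ContDiff ℝ 2 φ) {s : Set ℝ} (hs : Convex ℝ s)
    {C a x : ℝ} (hC : ∀ t ∈ s, |deriv (deriv φ) t| ≤ C) (ha : a ∈ s) (hx : x ∈ s) :
    |φ x - φ a - deriv φ a * (x - a)| ≤ C * (x - a) ^ 2 / 2 := by
  rcases eq_or_ne a x with rfl | hax
  · simp
  obtain ⟨ξ, hξ, hrem⟩ := taylor_mean_remainder_lagrange_iteratedDeriv (n := 1) hax hφ.contDiffOn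
  rw [taylorWithinEval_one φ (uniqueDiffOn_uIcc hax a left_mem_uIcc)
    (hφ.differentiable two_ne_zero a), sub_add_eq_sub_sub, iteratedDeriv_succ, iteratedDeriv_one]
    at hrem
  have hξs : ξ ∈ s := hs.ordConnected.uIcc_subset ha hx (uIoo_subset_uIcc_self hξ)
  rw [hrem, abs_div, abs_mul, abs_of_nonneg (sq_nonneg (x - a))]
  norm_num [Nat.factorial]
  gcongr
  exact hC ξ hξs

lemma norm_exp_phase_sub_exp_linearization_le {φ : ℝ → ℝ} (hφ : ContDiff ℝ 2 φ) {s : Set ℝ}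
    (hs : Convex ℝ s) {C a t N : ℝ} (hC : ∀ u ∈ s, |deriv (deriv φ) u| ≤ C) (ha : a ∈ s)
    (ht : t ∈ s) (hN : 0 < N) :
    ‖exp (2 * Real.pi * I * (φ t : ℂ) / N) -
        exp (2 * Real.pi * I / N * ((φ a : ℂ) + ((deriv φ a : ℝ) : ℂ) * ((t : ℂ) - (a : ℂ))))‖ ≤
      Real.pi * C * (t - a) ^ 2 / N := by
  have hlhs : 2 * Real.pi * I * (φ t : ℂ) / N = ((2 * Real.pi * φ t / N : ℝ) : ℂ) * I := by
    push_cast; ring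
  have hrhs : 2 * Real.pi * I / N * ((φ a : ℂ) + ((deriv φ a : ℝ) : ℂ) * ((t : ℂ) - (a : ℂ))) =
      ((2 * Real.pi * (φ a + deriv φ a * (t - a)) / N : ℝ) : ℂ) * I := by
    push_cast; ring
  have hdiff : 2 * Real.pi * φ t / N - 2 * Real.pi * (φ a + deriv φ a * (t - a)) / N =
      2 * Real.pi / N * (φ t - φ a - deriv φ a * (t - a)) := by
    ring
  rw [hlhs, hrhs]
  calc _ ≤ _ := norm_exp_ofReal_mul_I_sub_exp_ofReal_mul_I_le _ _
    _ = 2 * Real.pi / N * |φ t - φ a - deriv φ a * (t - a)| := by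
        rw [hdiff, abs_mul, abs_of_pos (by positivity)]
    _ ≤ 2 * Real.pi / N * (C * (t - a) ^ 2 / 2) := by
        gcongr; exact abs_sub_sub_deriv_mul_le hφ hs hC ha ht
    _ = Real.pi * C * (t - a) ^ 2 / N := by ring

lemma norm_modulated_sub_linearization_le {A φ : ℝ → ℝ} (hA : Differentiable ℝ A)
    (hφ : ContDiff ℝ 2 φ) {s : Set ℝ} (hs : Convex ℝ s) {CA Cφ a t N : ℝ}
    (hCA : ∀ u ∈ s, |deriv A u| ≤ CA) (hCφ : ∀ u ∈ s, |deriv (deriv φ) u| ≤ Cφ)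
    (ha : a ∈ s) (ht : t ∈ s) (hN : 0 < N) :
    ‖(A t : ℂ) * exp (2 * Real.pi * I * (φ t : ℂ) / N) -
        (A a : ℂ) * exp (2 * Real.pi * I / N * ((φ a : ℂ) + ((deriv φ a : ℝ) : ℂ) * ((t : ℂ) - (a : ℂ))))‖ ≤
      CA * |t - a| + Real.pi * |A a| * Cφ * (t - a) ^ 2 / N := by
  set e := exp (2 * Real.pi * I * (φ t : ℂ) / N)
  set e₀ := exp (2 * Real.pi * I / N * ((φ a : ℂ) + ((deriv φ a : ℝ) : ℂ) * ((t : ℂ) - (a : ℂ))))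
  have he : ‖e‖ = 1 := by
    rw [norm_exp]; simp
  have hamp : |A t - A a| ≤ CA * |t - a| := by
    simpa only [Real.norm_eq_abs] using hs.norm_image_sub_le_of_norm_deriv_le
      (fun u _ => hA u) (fun u hu => (Real.norm_eq_abs _).trans_le (hCA u hu)) ha ht
  calc ‖(A t : ℂ) * e - A a * e₀‖ = ‖((A t - A a : ℝ) : ℂ) * e + A a * (e - e₀)‖ := by
        push_cast; ring_nf
    _ ≤ |A t - A a| + |A a| * ‖e - e₀‖ := by
        refine (norm_add_le _ _).trans_eq ?_
        rw [norm_mul, norm_mul, he, mul_one, norm_real, norm_real, Real.norm_eq_abs,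
          Real.norm_eq_abs]
    _ ≤ CA * |t - a| + |A a| * (Real.pi * Cφ * (t - a) ^ 2 / N) := by
        gcongr; exact norm_exp_phase_sub_exp_linearization_le hφ hs hCφ ha ht hN
    _ = CA * |t - a| + Real.pi * |A a| * Cφ * (t - a) ^ 2 / N := by ring

lemma norm_sum_mul_sub_sum_mul_le {ι : Type*} (s : Finset ι) (x x₀ c e : ι → ℂ)
    (he : ∀ i ∈ s, ‖e i‖ = 1) :
    ‖∑ i ∈ s, x i * c i * e i - ∑ i ∈ s, x₀ i * c i * e i‖ ≤ ∑ i ∈ s, ‖c i‖ * ‖x i - x₀ i‖ := by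
  rw [← sum_sub_distrib]
  refine (norm_sum_le _ _).trans (sum_le_sum fun i hi => le_of_eq ?_)
  rw [← sub_mul, ← sub_mul, norm_mul, norm_mul, he i hi, mul_one, mul_comm]

theorem stmt11 (N : ℕ) [NeZero N] (g : ZMod N → ℂ) (A φ : ℝ → ℝ)
    (hA : Differentiable ℝ A) (hφ : ContDiff ℝ 2 φ)
    (CA Cφ : ℝ)
    (hCA : ∀ t ∈ Set.Icc (0 : ℝ) ((N : ℝ) - 1), |deriv A t| ≤ CA)
    (hCφ : ∀ t ∈ Set.Icc (0 : ℝ) ((N : ℝ) - 1), |deriv (deriv φ) t| ≤ Cφ)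
    (n : ℕ) (hn : n < N) (l : ℤ)
    (x x₀ : ℕ → ℂ)
    (hx : ∀ k : ℕ, x k = ((A k : ℝ) : ℂ) *
      Complex.exp (2 * (Real.pi : ℂ) * Complex.I * ((φ k : ℝ) : ℂ) / (N : ℂ)))
    (hx₀ : ∀ k : ℕ, x₀ k = ((A n : ℝ) : ℂ) *
      Complex.exp ((2 * (Real.pi : ℂ) * Complex.I / (N : ℂ)) *
        (((φ n : ℝ) : ℂ) + ((deriv φ n : ℝ) : ℂ) * ((k : ℂ) - (n : ℂ))))) :
    ‖
      ((∑ k ∈ Finset.range N, x k * (starRingEnd ℂ) (g ((k : ZMod N) - (n : ZMod N))) *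
          Complex.exp (-(2 * (Real.pi : ℂ) * Complex.I) * (l : ℂ) * ((k : ℂ) - (n : ℂ)) / (N : ℂ))) -
       (∑ k ∈ Finset.range N, x₀ k * (starRingEnd ℂ) (g ((k : ZMod N) - (n : ZMod N))) *
          Complex.exp (-(2 * (Real.pi : ℂ) * Complex.I) * (l : ℂ) * ((k : ℂ) - (n : ℂ)) / (N : ℂ))))‖ ≤
      CA * (∑ k ∈ Finset.range N, ‖g ((k : ZMod N) - (n : ZMod N))‖ * |(k : ℝ) - (n : ℝ)|) +
      Real.pi * |A n| * Cφ * (1 / (N : ℝ)) *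
        (∑ k ∈ Finset.range N, ‖g ((k : ZMod N) - (n : ZMod N))‖ * ((k : ℝ) - (n : ℝ)) ^ 2) := by
  have hN : (0 : ℝ) < N := by exact_mod_cast Nat.pos_of_neZero N
  have hmem : ∀ k < N, (k : ℝ) ∈ Icc (0 : ℝ) (N - 1) := fun k hk =>
    ⟨k.cast_nonneg, by rw [le_sub_iff_add_le]; exact_mod_cast hk⟩
  refine (norm_sum_mul_sub_sum_mul_le _ _ _ _ _ fun k _ => by rw [norm_exp]; simp).trans ?_
  calc _ ≤ ∑ k ∈ range N, ‖g ((k : ZMod N) - (n : ZMod N))‖ *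
        (CA * |(k : ℝ) - n| + Real.pi * |A n| * Cφ * ((k : ℝ) - n) ^ 2 / N) := by
        refine sum_le_sum fun k hk => ?_
        rw [norm_conj, hx, hx₀]
        gcongr
        simpa only [ofReal_natCast] using norm_modulated_sub_linearization_le hA hφ
          (convex_Icc _ _) hCA hCφ (hmem n hn) (hmem k (mem_range.mp hk)) hN
    _ = _ := by
        rw [mul_sum, mul_sum, ← sum_add_distrib]
        exact sum_congr rfl fun k _ => by ring
end
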